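/- Let p be a permutation of {1,...,n} and suppose p(j+1) = p(j) + 1 for some j. Then p is achievable by two stacks in series if and only if the permutation obtained from p by deleting the entry p(j) (and relabeling to obtain a permutation of {1,...,n-1}) is achievable by two stacks in series. -/

import Mathlib

namespace TwoStacks

/-- A state of the two-stacks-in-series machine: remaining input,
stack 1, stack 2 (tops at the head), and the output so far. -/
structure St where
  inp : List ℕ
  s1 : List ℕ
  s2 : List ℕ
  out : List ℕ
deriving DecidableEq

/-- The three moves. -/
inductive Mv
  | rho  -- input → stack 1
  | lam  -- stack 1 → stack 2
  | mu   -- stack 2 → output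
deriving DecidableEq

/-- One move of the machine (`none` if the move is not applicable). -/
def step : Mv → St → Option St
  | .rho, ⟨x :: xs, s1, s2, o⟩ => some ⟨xs, x :: s1, s2, o⟩
  | .lam, ⟨i, x :: xs, s2, o⟩ => some ⟨i, xs, x :: s2, o⟩
  | .mu,  ⟨i, s1, x :: xs, o⟩ => some ⟨i, s1, xs, o ++ [x]⟩
  | _, _ => none

/-- Run a word of moves on a state. -/
def run (w : List Mv) (s : St) : Option St :=
  w.foldlM (fun s m => step m s) s

/-- The list 1,2,…,n. -/
def idSeq (n : ℕ) : List ℕ := (List.range n).map (· + 1)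

/-- The one-line notation p(1),…,p(n) (values in {1,…,n}) of a permutation. -/
def permList {n : ℕ} (p : Equiv.Perm (Fin n)) : List ℕ :=
  List.ofFn fun i => (p i : ℕ) + 1

/-- p is achievable: from input 1,…,n some word of moves outputs p(1),…,p(n). -/
def Achievable {n : ℕ} (p : Equiv.Perm (Fin n)) : Prop :=
  ∃ w, run w ⟨idSeq n, [], [], []⟩ = some ⟨[], [], [], permList p⟩

/-- p is sortable: from input p(1),…,p(n) some word of moves outputs 1,…,n. -/
def Sortable {n : ℕ} (p : Equiv.Perm (Fin n)) : Prop :=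
  ∃ w, run w ⟨permList p, [], [], []⟩ = some ⟨[], [], [], idSeq n⟩

/-- A list of (distinct) naturals is achievable as an output. -/
def AchList (l : List ℕ) : Prop :=
  ∃ w, run w ⟨idSeq l.length, [], [], []⟩ = some ⟨[], [], [], l⟩

/-- Standardization (pattern) of a list with distinct entries:
each entry is replaced by its rank (1-based). -/
def std (l : List ℕ) : List ℕ :=
  l.map fun x => (l.filter (· ≤ x)).length

/-- An operation sequence of length 3n: n of each letter, and every
prefix has #ρ ≥ #λ ≥ #μ. -/
def OpSeq (n : ℕ) (w : List Mv) : Prop :=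
  w.length = 3 * n ∧ w.count .rho = n ∧ w.count .lam = n ∧ w.count .mu = n ∧
  ∀ u, u <+: w → u.count .mu ≤ u.count .lam ∧ u.count .lam ≤ u.count .rho

/-- An x,y-Catalan word: word over {x,y} with equally many x's and y's
in which every prefix has at least as many x's as y's. -/
def CatWord (x y : Mv) (w : List Mv) : Prop :=
  (∀ m ∈ w, m = x ∨ m = y) ∧ w.count x = w.count y ∧
  ∀ u, u <+: w → u.count y ≤ u.count x

/-- Two words have the same effect: applied to any state on which both
are applicable, they give the same resulting state. -/
def SameEffect (v v' : List Mv) : Prop :=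
  ∀ s t t', run v s = some t → run v' s = some t' → t = t'

/-- Rank of a letter for the order ρ < λ < μ. -/
def rk : Mv → ℕ
  | .rho => 0
  | .lam => 1
  | .mu => 2

/-- The order ρ < λ < μ on letters. -/
def mlt (a b : Mv) : Prop := rk a < rk b

/-- Lexicographic order on words induced by ρ < λ < μ. -/
def wordLt (v v' : List Mv) : Prop := List.Lex mlt v v'

/-- No entry is immediately followed by its successor. -/
def IncAvoid (l : List ℕ) : Prop :=
  ∀ j (h : j + 1 < l.length), l.get ⟨j + 1, h⟩ ≠ l.get ⟨j, by omega⟩ + 1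

section Aux

lemma run_nil (s : St) : run [] s = some s := rfl

lemma run_cons (m : Mv) (w : List Mv) (s : St) :
    run (m :: w) s = (step m s).bind (fun t => run w t) := by
  cases h : step m s <;> simp [run, List.foldlM, h, Option.bind]

lemma run_append (u v : List Mv) (s : St) :
    run (u ++ v) s = (run u s).bind (fun t => run v t) := by
  cases h : run u s <;> simp [run, List.foldlM_append] at h ⊢ <;> simp [h]

/-- Lift a per-step simulation to runs. -/
lemma liftRun (T : St → St)
    (H : ∀ m s s', step m s = some s' → ∃ w', run w' (T s) = some (T s')) :
    ∀ w s s', run w s = some s' → ∃ w', run w' (T s) = some (T s') := by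
  intro w
  induction w with
  | nil => intro s s' h; simp [run] at h; exact ⟨[], by rw [h]; rfl⟩
  | cons m w ih =>
    intro s s' h
    rw [run_cons] at h
    cases hm : step m s with
    | none => simp [hm] at h
    | some t =>
      simp [hm] at h
      obtain ⟨w₁, h₁⟩ := H m s t hm
      obtain ⟨w₂, h₂⟩ := ih t s' h
      exact ⟨w₁ ++ w₂, by rw [run_append, h₁]; simpa using h₂⟩

variable (a : ℕ)

/-- Relabeling downward (used after deleting the value `a`). -/
def fdn (v : ℕ) : ℕ := if v < a then v else v - 1

/-- Relabeling upward. -/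
def gup (v : ℕ) : ℕ := if v < a then v else v + 1

/-- Projection of a list: delete `a` and relabel. -/
def pl (l : List ℕ) : List ℕ := (l.filter (fun v => v ≠ a)).map (fdn a)

def projSt (s : St) : St := ⟨pl a s.inp, pl a s.s1, pl a s.s2, pl a s.out⟩

def eIn (v : ℕ) : List ℕ := if v = a then [a, a + 1] else [gup a v]
def eS1 (v : ℕ) : List ℕ := if v = a then [a + 1, a] else [gup a v]
def eS2 (v : ℕ) : List ℕ := if v = a then [a, a + 1] else [gup a v]

def expSt (s : St) : St :=
  ⟨s.inp.flatMap (eIn a), s.s1.flatMap (eS1 a), s.s2.flatMap (eS2 a), s.out.flatMap (eS2 a)⟩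

lemma pl_cons (v : ℕ) (xs : List ℕ) :
    pl a (v :: xs) = if v = a then pl a xs else fdn a v :: pl a xs := by
  by_cases h : v = a <;> simp [pl, h]

lemma pl_append (xs ys : List ℕ) : pl a (xs ++ ys) = pl a xs ++ pl a ys := by
  simp [pl]

/-- Forward per-step simulation. -/
lemma proj_step (m : Mv) (s s' : St) (h : step m s = some s') :
    ∃ w', run w' (projSt a s) = some (projSt a s') := by
  obtain ⟨i, s1, s2, o⟩ := s
  cases m with
  | rho =>
    cases i with
    | nil => simp [step] at h
    | cons v xs =>
      simp [step] at h
      by_cases hv : v = a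
      · exact ⟨[], by rw [← h]; simp [run, projSt, pl_cons, hv]⟩
      · exact ⟨[.rho], by rw [← h]; simp [run, List.foldlM, projSt, pl_cons, hv, step]⟩
  | lam =>
    cases s1 with
    | nil => simp [step] at h
    | cons v xs =>
      simp [step] at h
      by_cases hv : v = a
      · exact ⟨[], by rw [← h]; simp [run, projSt, pl_cons, hv]⟩
      · exact ⟨[.lam], by rw [← h]; simp [run, List.foldlM, projSt, pl_cons, hv, step]⟩
  | mu =>
    cases s2 with
    | nil => simp [step] at h
    | cons v xs =>
      simp [step] at h
      by_cases hv : v = a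
      · exact ⟨[], by rw [← h]; simp [run, projSt, pl_cons, pl_append, hv, pl]⟩
      · exact ⟨[.mu], by rw [← h]; simp [run, List.foldlM, projSt, pl_cons, pl_append, hv, step, pl]⟩

/-- Backward per-step simulation. -/
lemma exp_step (m : Mv) (s s' : St) (h : step m s = some s') :
    ∃ w', run w' (expSt a s) = some (expSt a s') := by
  obtain ⟨i, s1, s2, o⟩ := s
  cases m with
  | rho =>
    cases i with
    | nil => simp [step] at h
    | cons v xs =>
      simp [step] at h
      by_cases hv : v = a
      · exact ⟨[.rho, .rho], by
          rw [← h]; simp [run, List.foldlM, expSt, eIn, eS1, hv, step]⟩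
      · exact ⟨[.rho], by
          rw [← h]; simp [run, List.foldlM, expSt, eIn, eS1, hv, step]⟩
  | lam =>
    cases s1 with
    | nil => simp [step] at h
    | cons v xs =>
      simp [step] at h
      by_cases hv : v = a
      · exact ⟨[.lam, .lam], by
          rw [← h]; simp [run, List.foldlM, expSt, eS1, eS2, hv, step]⟩
      · exact ⟨[.lam], by
          rw [← h]; simp [run, List.foldlM, expSt, eS1, eS2, hv, step]⟩
  | mu =>
    cases s2 with
    | nil => simp [step] at h
    | cons v xs =>
      simp [step] at h
      by_cases hv : v = a
      · exact ⟨[.mu, .mu], by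
          rw [← h]; simp [run, List.foldlM, expSt, eS2, hv, step]⟩
      · exact ⟨[.mu], by
          rw [← h]; simp [run, List.foldlM, expSt, eS2, hv, step]⟩

lemma idSeq_succ (m : ℕ) : idSeq (m + 1) = idSeq m ++ [m + 1] := by
  simp [idSeq, List.range_succ]

lemma length_idSeq (m : ℕ) : (idSeq m).length = m := by simp [idSeq]

lemma nodup_idSeq (m : ℕ) : (idSeq m).Nodup :=
  List.Nodup.map (fun x y h => by omega) List.nodup_range

lemma mem_idSeq {v m : ℕ} : v ∈ idSeq m ↔ 1 ≤ v ∧ v ≤ m := by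
  simp [idSeq]; constructor
  · rintro ⟨x, hx, rfl⟩; omega
  · intro h; exact ⟨v - 1, by omega, by omega⟩

lemma idSeq_eq_append {m : ℕ} (hm : 1 ≤ m) : idSeq m = idSeq (m - 1) ++ [m] := by
  obtain ⟨k, rfl⟩ : ∃ k, m = k + 1 := ⟨m - 1, by omega⟩
  simp [idSeq_succ]

lemma pl_idSeq (ha : 1 ≤ a) :
    ∀ m, pl a (idSeq m) = if m < a then idSeq m else idSeq (m - 1) := by
  intro m
  induction m with
  | zero => simp [idSeq, pl]
  | succ m ih =>
    rw [idSeq_succ, pl_append, ih]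
    by_cases h1 : m + 1 < a
    · have h2 : m < a := by omega
      simp [h1, h2, pl, fdn, show ¬ m + 1 = a by omega, show m + 1 < a from h1]
    · by_cases h2 : m + 1 = a
      · have h3 : m < a := by omega
        simp [h1, h2, h3, pl]
        rw [show a - 1 = m from by omega]
      · have h3 : ¬ m < a := by omega
        simp [h1, h3, pl, fdn, h2, show ¬ m + 1 < a from h1]
        exact (idSeq_eq_append (show 1 ≤ m from by omega)).symm

lemma eIn_idSeq (ha : 1 ≤ a) :
    ∀ m, (idSeq m).flatMap (eIn a) = if m < a then idSeq m else idSeq (m + 1) := by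
  intro m
  induction m with
  | zero => simp [idSeq, show 0 < a by omega]
  | succ m ih =>
    rw [idSeq_succ, List.flatMap_append, ih]
    by_cases h1 : m + 1 < a
    · have h2 : m < a := by omega
      simp [h1, h2, eIn, gup, show ¬ m + 1 = a by omega, show m + 1 < a from h1, idSeq_succ]
    · by_cases h2 : m + 1 = a
      · have h3 : m < a := by omega
        simp [h1, h2, h3, eIn]
        rw [← h2, idSeq_succ, idSeq_succ]
        simp
      · have h3 : ¬ m < a := by omega
        simp [h1, h3, eIn, h2, gup, show ¬ m + 1 < a from h1, idSeq_succ]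

lemma countP_le_idSeq_filter (ha : 1 ≤ a) (x : ℕ) :
    ∀ m, (((idSeq m).filter (fun v => v ≠ a)).countP (fun v => v ≤ x)) =
      (if m ≤ x then m else x) - (if a ≤ m ∧ a ≤ x then 1 else 0) := by
  intro m
  induction m with
  | zero => simp [idSeq]
  | succ m ih =>
    rw [idSeq_succ, List.filter_append, List.countP_append, ih]
    by_cases h1 : m + 1 = a
    · subst h1
      by_cases h2 : m + 1 ≤ x <;> simp [h2] <;> ((try split_ifs) <;> omega)
    · by_cases h2 : m + 1 ≤ x <;> simp [h1, h2] <;> (split_ifs <;> omega)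

lemma flat_id (Z : List ℕ) (h : ∀ v ∈ Z, eS2 a (fdn a v) = [v]) :
    (Z.map (fdn a)).flatMap (eS2 a) = Z := by
  induction Z with
  | nil => simp
  | cons v Z ih =>
    simp only [List.map_cons, List.flatMap_cons, h v List.mem_cons_self,
      ih (fun u hu => h u (List.mem_cons_of_mem _ hu))]
    rfl

lemma eS2_fdn (v : ℕ) (h1 : v ≠ a) (h2 : v ≠ a + 1) : eS2 a (fdn a v) = [v] := by
  unfold eS2 fdn gup
  by_cases hv : v < a
  · simp [hv, show ¬ v = a from h1, hv]
  · have hv2 : ¬ v - 1 = a := by omega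
    have hv3 : ¬ v - 1 < a := by omega
    simp [hv, hv2, hv3]
    omega

end Aux
theorem achievable_iff_delete_increment (n : ℕ) (l : List ℕ) (hperm : l.Perm (idSeq n))
    (j : ℕ) (hj : j + 1 < l.length)
    (hinc : l.get ⟨j + 1, hj⟩ = l.get ⟨j, by omega⟩ + 1) :
    AchList l ↔ AchList (std (l.eraseIdx j)) := by
  have hlen : l.length = n := by rw [hperm.length_eq, length_idSeq]
  have hj' : j < l.length := by omega
  set a := l.get ⟨j, by omega⟩ with ha_def
  have hnd : l.Nodup := hperm.nodup_iff.mpr (nodup_idSeq n)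
  have hmem : ∀ v, v ∈ l ↔ 1 ≤ v ∧ v ≤ n := fun v => by rw [hperm.mem_iff, mem_idSeq]
  have ha1 : 1 ≤ a := ((hmem a).1 (List.get_mem l ⟨j, by omega⟩)).1
  have haS : a + 1 ≤ n := by
    have h := ((hmem _).1 (List.get_mem l ⟨j + 1, hj⟩)).2
    rw [hinc] at h; exact h
  have hd1 : l.drop j = a :: l.drop (j + 1) := by
    rw [List.drop_eq_getElem_cons hj']; rfl
  have hd2 : l.drop (j + 1) = (a + 1) :: l.drop (j + 2) := by
    rw [List.drop_eq_getElem_cons hj]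
    have hg : l[j + 1]'hj = a + 1 := by rw [← hinc]; simp [List.get_eq_getElem]
    rw [hg]
  have hdec : l = l.take j ++ a :: (a + 1) :: l.drop (j + 2) := by
    conv_lhs => rw [← List.take_append_drop j l]
    rw [hd1, hd2]
  have her : l.eraseIdx j = l.take j ++ (a + 1) :: l.drop (j + 2) := by
    rw [List.eraseIdx_eq_take_drop_succ, hd2]
  have hnotin : (a ∉ l.take j ∧ a ∉ l.drop (j + 2)) ∧
      (a + 1 ∉ l.take j ∧ a + 1 ∉ l.drop (j + 2)) := by
    rw [hdec] at hnd
    simp [List.nodup_append, List.nodup_cons] at hnd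
    exact ⟨⟨fun h => (hnd.2.2 a h).1 rfl, hnd.2.1.1⟩, fun h => (hnd.2.2 _ h).2.1 rfl, hnd.2.1.2.1⟩
  have hfil : l.filter (fun v => v ≠ a) = l.eraseIdx j := by
    rw [her]
    conv_lhs => rw [hdec]
    rw [List.filter_append]
    congr 1
    · exact List.filter_eq_self.mpr (fun v hv => by
        simp; intro h; exact hnotin.1.1 (h ▸ hv))
    · rw [List.filter_cons, List.filter_cons]
      simp [show ¬ (a + 1 = a) by omega]
      exact fun v hv h => hnotin.1.2 (h ▸ hv)
  have hstd : std (l.eraseIdx j) = (l.eraseIdx j).map (fdn a) := by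
    unfold std
    apply List.map_congr_left
    intro x hx
    have hx2 : x ∈ l ∧ ¬ x = a := by
      rw [← hfil] at hx
      simpa using List.mem_filter.mp hx
    have hxr := (hmem x).1 hx2.1
    rw [← List.countP_eq_length_filter]
    have hperm2 : (l.eraseIdx j).Perm ((idSeq n).filter (fun v => v ≠ a)) := by
      rw [← hfil]; exact hperm.filter _
    rw [List.Perm.countP_eq _ hperm2, countP_le_idSeq_filter a ha1 x n]
    unfold fdn
    have hxa := hx2.2
    split_ifs <;> omega
  have hlen2 : (std (l.eraseIdx j)).length = n - 1 := by
    simp [std, List.length_eraseIdx, hj', hlen]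
    omega
  constructor
  · rintro ⟨w, hw⟩
    obtain ⟨w', hw'⟩ := liftRun (projSt a) (proj_step a) w _ _ hw
    refine ⟨w', ?_⟩
    have e1 : projSt a ⟨idSeq l.length, [], [], []⟩ =
        ⟨idSeq ((std (l.eraseIdx j)).length), [], [], []⟩ := by
      simp only [projSt, hlen, hlen2]
      rw [pl_idSeq a ha1 n]
      simp [show ¬ n < a by omega, pl]
    have e2 : projSt a ⟨[], [], [], l⟩ = ⟨[], [], [], std (l.eraseIdx j)⟩ := by
      simp only [projSt]
      have hpll : pl a l = std (l.eraseIdx j) := by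
        rw [pl, hfil, hstd]
      rw [hpll]
      simp [pl]
    rw [← e1, ← e2]
    exact hw'
  · rintro ⟨w, hw⟩
    obtain ⟨w', hw'⟩ := liftRun (expSt a) (exp_step a) w _ _ hw
    refine ⟨w', ?_⟩
    have e1 : expSt a ⟨idSeq ((std (l.eraseIdx j)).length), [], [], []⟩ =
        ⟨idSeq l.length, [], [], []⟩ := by
      simp only [expSt, hlen, hlen2]
      rw [eIn_idSeq a ha1 (n - 1)]
      simp [show ¬ n - 1 < a by omega, show n - 1 + 1 = n by omega]
    have e2 : expSt a ⟨[], [], [], std (l.eraseIdx j)⟩ = ⟨[], [], [], l⟩ := by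
      simp only [expSt]
      have hout : (std (l.eraseIdx j)).flatMap (eS2 a) = l := by
        rw [hstd, her]
        rw [List.map_append, List.flatMap_append, List.map_cons, List.flatMap_cons]
        rw [flat_id a _ (fun v hv => eS2_fdn a v
          (fun h => hnotin.1.1 (h ▸ hv)) (fun h => hnotin.2.1 (h ▸ hv)))]
        rw [flat_id a _ (fun v hv => eS2_fdn a v
          (fun h => hnotin.1.2 (h ▸ hv)) (fun h => hnotin.2.2 (h ▸ hv)))]
        have hfa : fdn a (a + 1) = a := by unfold fdn; split_ifs <;> omega
        have heS : eS2 a a = [a, a + 1] := by simp [eS2]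
        rw [hfa, heS]
        exact hdec.symm
      rw [hout]
      simp
    rw [← e1, ← e2]
    exact hw'
end TwoStacks
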